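/- arXiv:1401.2073 — 3 statements merged into one kernel-verified Lean document; each statement's English description precedes it below -/
import Mathlib

section
/- For t = k² ∈ (0,1) let H_N(t) := t(t−1)·(d/dt)·log D_N[w(·,t)], and for a > −1, b > −1, c ∈ ℝ let σ(t,n,a,b,c) := t(t−1)·(d/dt)·log D_n[w₂(·,t,a,b,c)] + d₁·t + d₀, where d₁ = −n·c − (a+c)²/4 and d₀ = −(n/2)(n+a+b) + (c/4)(2n+a+b+c) − a·b/4. Then for every n ≥ 0: H_{2n}(t) = σ(t,n,−1/2,α,β) + σ(t,n,1/2,α,β) + (β²/2 + 2nβ + 1/8)·t − (β/2)(2n+α+β) + n(n+α), and H_{2n+1}(t) = σ(t,n+1,−1/2,α,β) + σ(t,n,1/2,α,β) + (β²/2 + (2n+1)β + 1/8)·t − (β/2)(2n+1+α+β) + (1/4)(2n+1)(2n+1+2α). -/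
open MeasureTheory

/-- The Hankel determinant of the moments of `w(x,t) = (1-x²)^α (1-tx²)^β` on `[-1,1]`. -/
noncomputable def hankelW (α β t : ℝ) (n : ℕ) : ℝ :=
  Matrix.det (Matrix.of fun i j : Fin n =>
    ∫ x in (-1:ℝ)..1, x ^ ((i:ℕ) + (j:ℕ)) * ((1 - x ^ 2) ^ α * (1 - t * x ^ 2) ^ β))

/-- The Hankel determinant of the moments of `w₂(x,t,a,b,c) = x^a (1-x)^b (1-tx)^c`
on `[0,1]`. -/
noncomputable def hankelW2 (a b c t : ℝ) (n : ℕ) : ℝ :=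
  Matrix.det (Matrix.of fun i j : Fin n =>
    ∫ x in (0:ℝ)..1, x ^ ((i:ℕ) + (j:ℕ)) * (x ^ a * (1 - x) ^ b * (1 - t * x) ^ c))

/-- `σ(t,n,a,b,c) = t(t-1) d/dt log D_n[w₂(·,t,a,b,c)] + d₁ t + d₀` with
`d₁ = −nc − (a+c)²/4` and `d₀ = −(n/2)(n+a+b) + (c/4)(2n+a+b+c) − ab/4`. -/
noncomputable def sigmaW2 (t : ℝ) (n : ℕ) (a b c : ℝ) : ℝ :=
  t * (t - 1) * deriv (fun s => Real.log (hankelW2 a b c s n)) t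
    + (-(n:ℝ) * c - (a + c) ^ 2 / 4) * t
    + (-((n:ℝ) / 2) * ((n:ℝ) + a + b) + (c / 4) * (2 * (n:ℝ) + a + b + c) - a * b / 4)

/-- `H_N(t) = t(t-1) d/dt log D_N[w(·,t)]`. -/
noncomputable def HW (α β : ℝ) (N : ℕ) (t : ℝ) : ℝ :=
  t * (t - 1) * deriv (fun s => Real.log (hankelW α β s N)) t

/-!
The weight `w(·,t)` is even, so its odd moments vanish and listing the indices by parity makes
the Hankel matrix of `w` block diagonal. The substitution `u = x²` identifies the two blocks with
the Hankel matrices of `w₂(·,t,-1/2,α,β)` and `w₂(·,t,1/2,α,β)`, whence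
`D_{n₀+n₁}[w] = D_{n₀}[w₂(·,t,-1/2,α,β)] · D_{n₁}[w₂(·,t,1/2,α,β)]` for `n₀ ∈ {n₁, n₁+1}`.
These determinants are positive (Gram determinants of the monomials) and differentiable in `t`
(dominated differentiation under the integral), so `t(t-1) d/dt log` turns the factorization
into a sum; the remaining affine terms are the constants `d₁ t + d₀` built into `σ`.
-/

open Set Filter Topology Polynomial

def finSumFinEvenOddEquiv {n₀ n₁ : ℕ} (h₁ : n₁ ≤ n₀) (h₂ : n₀ ≤ n₁ + 1) :
    Fin n₀ ⊕ Fin n₁ ≃ Fin (n₀ + n₁) where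
  toFun := Sum.elim (fun i => ⟨2 * i, by omega⟩) (fun i => ⟨2 * i + 1, by omega⟩)
  invFun k :=
    if h : (k : ℕ) % 2 = 0 then .inl ⟨k / 2, by omega⟩ else .inr ⟨k / 2, by omega⟩
  left_inv := by
    rintro (i | i)
    · simp
    · simp only [Sum.elim_inr, Nat.mul_add_mod_self_left, Nat.mod_succ, one_ne_zero,
        ↓reduceDIte, Sum.inr.injEq, Fin.ext_iff]
      omega
  right_inv k := by
    by_cases h : (k : ℕ) % 2 = 0 <;>
      simp only [h, ↓reduceDIte, Sum.elim_inl, Sum.elim_inr, Fin.ext_iff] <;> omega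

theorem Matrix.det_hankel_eq_mul_of_odd_eq_zero {R : Type*} [CommRing R] (m : ℕ → R)
    (hodd : ∀ k, m (2 * k + 1) = 0) {n₀ n₁ : ℕ} (h₁ : n₁ ≤ n₀) (h₂ : n₀ ≤ n₁ + 1) :
    (Matrix.of fun i j : Fin (n₀ + n₁) => m (i + j)).det =
      (Matrix.of fun i j : Fin n₀ => m (2 * (i + j))).det *
        (Matrix.of fun i j : Fin n₁ => m (2 * (i + j) + 2)).det := by
  let e := finSumFinEvenOddEquiv h₁ h₂
  have hblocks : (Matrix.of fun i j : Fin (n₀ + n₁) => m (i + j)).submatrix e e =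
      Matrix.fromBlocks (Matrix.of fun i j : Fin n₀ => m (2 * (i + j))) 0 0
        (Matrix.of fun i j : Fin n₁ => m (2 * (i + j) + 2)) := by
    ext (i | i) (j | j)
    · simp [e, finSumFinEvenOddEquiv, mul_add]
    · simpa [e, finSumFinEvenOddEquiv, ← add_assoc, ← mul_add] using hodd (i + j)
    · simpa [e, finSumFinEvenOddEquiv, add_right_comm _ 1, ← mul_add] using hodd (i + j)
    · simp only [e, finSumFinEvenOddEquiv, Equiv.coe_fn_mk, Matrix.submatrix_apply,
        Sum.elim_inr, Matrix.of_apply, Matrix.fromBlocks_apply₂₂]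
      congr 1
      ring
  rw [← Matrix.det_submatrix_equiv_self e, hblocks, Matrix.det_fromBlocks_zero₁₂]

theorem intervalIntegrable_eval_mul {w : ℝ → ℝ} {l u : ℝ}
    (hint : ∀ k : ℕ, IntervalIntegrable (fun x => x ^ k * w x) volume l u) (p : ℝ[X]) :
    IntervalIntegrable (fun x => p.eval x * w x) volume l u := by
  simpa only [eval_eq_sum_range, Finset.sum_mul, Finset.sum_fn, mul_assoc] using
    IntervalIntegrable.sum _ fun i _ => (hint i).const_mul (p.coeff i)

theorem integral_sq_eval_mul_pos {w : ℝ → ℝ} {l u : ℝ} (hlu : l < u)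
    (hw : ∀ x ∈ Ioo l u, 0 < w x) {p : ℝ[X]} (hp : p ≠ 0)
    (hint : ∀ k : ℕ, IntervalIntegrable (fun x => x ^ k * w x) volume l u) :
    0 < ∫ x in l..u, p.eval x ^ 2 * w x := by
  have hint_sq : IntegrableOn (fun x => (p ^ 2).eval x * w x) (Ioo l u) :=
    (intervalIntegrable_eval_mul hint (p ^ 2)).1.mono_set Ioo_subset_Ioc_self
  simp only [eval_pow] at hint_sq
  rw [intervalIntegral.integral_of_le hlu.le, integral_Ioc_eq_integral_Ioo,
    setIntegral_pos_iff_support_of_nonneg_ae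
      (ae_restrict_of_forall_mem measurableSet_Ioo fun x hx => by positivity [(hw x hx).le])
      hint_sq]
  have hroots : Ioo l u \ {x | p.IsRoot x} ⊆
      Function.support (fun x => p.eval x ^ 2 * w x) ∩ Ioo l u :=
    fun x ⟨hx, hroot⟩ => ⟨(mul_pos (sq_pos_of_ne_zero hroot) (hw x hx)).ne', hx⟩
  calc (0 : ENNReal) < volume (Ioo l u) := by simpa using hlu
    _ = volume (Ioo l u \ {x | p.IsRoot x}) :=
      (measure_sdiff_null ((Polynomial.finite_setOfPred_isRoot hp).measure_zero _)).symm
    _ ≤ _ := measure_mono hroots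

theorem sum_mul_sum_hankel_eq_integral_sq {w : ℝ → ℝ} {l u : ℝ} {n : ℕ}
    (hint : ∀ k : ℕ, IntervalIntegrable (fun x => x ^ k * w x) volume l u) (v : Fin n → ℝ) :
    ∑ i : Fin n, v i * ∑ j : Fin n, (∫ x in l..u, x ^ ((i : ℕ) + (j : ℕ)) * w x) * v j =
      ∫ x in l..u, (∑ i, v i * x ^ (i : ℕ)) ^ 2 * w x := by
  have hpointwise : ∀ x, (∑ i, v i * x ^ (i : ℕ)) ^ 2 * w x =
      ∑ i : Fin n, v i * ∑ j : Fin n, x ^ ((i : ℕ) + (j : ℕ)) * w x * v j := by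
    intro x
    simp only [sq, Finset.mul_sum, Finset.sum_mul, pow_add]
    exact Finset.sum_congr rfl fun i _ => Finset.sum_congr rfl fun j _ => by ring
  have hint_row : ∀ i : Fin n, IntervalIntegrable
      (fun x => v i * ∑ j : Fin n, x ^ ((i : ℕ) + (j : ℕ)) * w x * v j) volume l u := fun i => by
    simpa only [Finset.sum_fn] using
      (IntervalIntegrable.sum Finset.univ fun j _ => (hint _).mul_const (v j)).const_mul (v i)
  simp only [hpointwise, intervalIntegral.integral_finsetSum fun i _ => hint_row i]
  refine Finset.sum_congr rfl fun i _ => ?_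
  rw [intervalIntegral.integral_const_mul, intervalIntegral.integral_finsetSum fun j _ =>
    (hint _).mul_const _]
  simp only [intervalIntegral.integral_mul_const]

theorem det_hankel_integral_pos {w : ℝ → ℝ} {l u : ℝ} (hlu : l < u)
    (hw : ∀ x ∈ Ioo l u, 0 < w x)
    (hint : ∀ k : ℕ, IntervalIntegrable (fun x => x ^ k * w x) volume l u) (n : ℕ) :
    0 < (Matrix.of fun i j : Fin n => ∫ x in l..u, x ^ ((i : ℕ) + (j : ℕ)) * w x).det := by
  refine Matrix.PosDef.det_pos (Matrix.PosDef.of_dotProduct_mulVec_pos ?_ fun v hv => ?_)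
  · ext i j
    simp [add_comm]
  · classical
    have heval : ∀ x, (ofFn n v).eval x = ∑ i, v i * x ^ (i : ℕ) := by
      simp [ofFn_eq_sum_monomial, eval_finsetSum]
    have hp : ofFn n v ≠ 0 := by
      simpa [ofFn_zero] using (injective_ofFn n).ne hv
    simp only [star_trivial, dotProduct, Matrix.mulVec, Matrix.of_apply,
      sum_mul_sum_hankel_eq_integral_sq hint, ← heval]
    exact integral_sq_eval_mul_pos hlu hw hp hint

theorem one_sub_mul_pos {s x : ℝ} (hs : s < 1) (hx : x ∈ Icc (0 : ℝ) 1) : 0 < 1 - s * x := by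
  rcases le_or_gt 0 s with hs0 | hs0 <;> nlinarith [hx.1, hx.2]

theorem integrableOn_rpow_mul_one_sub_rpow {a b : ℝ} (ha : -1 < a) (hb : -1 < b) :
    IntegrableOn (fun x : ℝ => x ^ a * (1 - x) ^ b) (Ioc 0 1) := by
  rw [← Ioc_union_Ioc_eq_Ioc (by norm_num : (0 : ℝ) ≤ 1 / 2) (by norm_num : (1 / 2 : ℝ) ≤ 1)]
  refine IntegrableOn.union ?_ ?_
  · have hxa : IntegrableOn (fun x : ℝ => x ^ a) (Ioc 0 (1 / 2)) :=
      (intervalIntegral.intervalIntegrable_rpow' ha).1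
    refine hxa.mul_continuousOn_of_subset (K := Icc 0 (1 / 2)) ?_ measurableSet_Ioc
      isCompact_Icc Ioc_subset_Icc_self
    exact (continuousOn_const.sub continuousOn_id).rpow_const fun x hx =>
      Or.inl (by linarith [hx.2] : (1 : ℝ) - x ≠ 0)
  · have hxb : IntegrableOn (fun x : ℝ => (1 - x) ^ b) (Ioc (1 / 2) 1) := by
      have h := (intervalIntegral.intervalIntegrable_rpow' hb (a := 0) (b := 1 / 2)).comp_sub_left 1
      rw [sub_zero, show (1 : ℝ) - 1 / 2 = 1 / 2 by norm_num] at h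
      exact h.symm.1
    refine hxb.continuousOn_mul_of_subset (K := Icc (1 / 2) 1) ?_ isCompact_Icc
      measurableSet_Ioc Ioc_subset_Icc_self
    exact continuousOn_id.rpow_const fun x hx => Or.inl (by linarith [hx.1] : x ≠ 0)

theorem integrableOn_pow_mul_mul_one_sub_mul_rpow {w : ℝ → ℝ} (hw : IntegrableOn w (Ioc 0 1))
    (k : ℕ) {t : ℝ} (ht : t < 1) (c : ℝ) :
    IntegrableOn (fun x => x ^ k * (w x * (1 - t * x) ^ c)) (Ioc 0 1) := by
  have hcont : ContinuousOn (fun x : ℝ => x ^ k * (1 - t * x) ^ c) (Icc 0 1) :=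
    (continuousOn_pow k).mul <|
      (continuousOn_const.sub (continuousOn_const.mul continuousOn_id)).rpow_const
        fun x hx => Or.inl (one_sub_mul_pos ht hx).ne'
  refine (hw.mul_continuousOn_of_subset hcont measurableSet_Ioc isCompact_Icc
    Ioc_subset_Icc_self).congr_fun (fun x _ => by ring) measurableSet_Ioc

theorem differentiableAt_integral_pow_mul_mul_one_sub_mul_rpow {w : ℝ → ℝ}
    (hw : IntegrableOn w (Ioc 0 1)) (k : ℕ) (c : ℝ) {t : ℝ} (ht : t < 1) :
    DifferentiableAt ℝ (fun s => ∫ x in (0 : ℝ)..1, x ^ k * (w x * (1 - s * x) ^ c)) t := by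
  set N := Icc (t - 1) ((t + 1) / 2)
  have hN : ∀ s ∈ N, s < 1 := fun s hs => by linarith [hs.2]
  -- `∂ₛ (1 - s x) ^ c = -c x (1 - s x) ^ (c - 1)`, so the derivative is again a moment of this
  -- kind (with `k + 1`, `c - 1`), dominated on `N` by `|c| C |w|` since `N × [0,1]` is compact.
  obtain ⟨C, hC⟩ := (isCompact_Icc.prod isCompact_Icc).exists_bound_of_continuousOn
    (f := fun p : ℝ × ℝ => p.2 ^ (k + 1) * (1 - p.1 * p.2) ^ (c - 1))
    (((continuous_snd.pow _).continuousOn).mul <|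
      ((continuous_const.sub (continuous_fst.mul continuous_snd)).continuousOn).rpow_const
        fun p hp => Or.inl (one_sub_mul_pos (hN _ hp.1) hp.2).ne')
  have hmoment : ∀ {s : ℝ}, s < 1 → ∀ (j : ℕ) (c' : ℝ),
      IntervalIntegrable (fun x => x ^ j * (w x * (1 - s * x) ^ c')) volume 0 1 :=
    fun hs j c' => (intervalIntegrable_iff_integrableOn_Ioc_of_le zero_le_one).2
      (integrableOn_pow_mul_mul_one_sub_mul_rpow hw j hs c')
  have hF'_meas :=
    (intervalIntegrable_iff.1 (hmoment ht (k + 1) (c - 1))).aestronglyMeasurable.const_mul (-c)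
  refine (intervalIntegral.hasDerivAt_integral_of_dominated_loc_of_deriv_le
    (F' := fun s x => -c * (x ^ (k + 1) * (w x * (1 - s * x) ^ (c - 1))))
    (bound := fun x => |c| * C * ‖w x‖) (s := N) (Icc_mem_nhds (by linarith) (by linarith))
    ?_ (hmoment ht k c) hF'_meas
    (ae_of_all _ fun x hx s hs => ?_) ?_ (ae_of_all _ fun x hx s hs => ?_)).2.differentiableAt
  · filter_upwards [Iio_mem_nhds ht] with s hs
    exact (intervalIntegrable_iff.1 (hmoment hs k c)).aestronglyMeasurable
  · rw [uIoc_of_le zero_le_one] at hx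
    calc ‖-c * (x ^ (k + 1) * (w x * (1 - s * x) ^ (c - 1)))‖
        = |c| * ‖x ^ (k + 1) * (1 - s * x) ^ (c - 1)‖ * ‖w x‖ := by
          simp only [norm_mul, norm_neg, Real.norm_eq_abs]; ring
      _ ≤ |c| * C * ‖w x‖ := by
          gcongr
          exact hC (s, x) ⟨hs, Ioc_subset_Icc_self hx⟩
  · exact (intervalIntegrable_iff_integrableOn_Ioc_of_le zero_le_one).2 (hw.norm.const_mul _)
  · rw [uIoc_of_le zero_le_one] at hx
    have hpos := one_sub_mul_pos (hN s hs) (Ioc_subset_Icc_self hx)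
    have := ((hasDerivAt_mul_const x).const_sub 1).rpow_const (p := c) (Or.inl hpos.ne')
    exact ((this.const_mul (w x)).const_mul (x ^ k)).congr_deriv (by ring)

theorem intervalIntegral.integral_neg_self_eq_zero_of_odd {f : ℝ → ℝ}
    (hf : ∀ x, f (-x) = -f x) (a : ℝ) : ∫ x in -a..a, f x = 0 := by
  have h := intervalIntegral.integral_comp_neg (a := -a) (b := a) f
  simp only [hf, intervalIntegral.integral_neg, neg_neg] at h
  linarith

theorem intervalIntegral.integral_neg_self_eq_two_mul_of_even {f : ℝ → ℝ}
    (hf : ∀ x, f (-x) = f x) {a : ℝ} (hint : IntervalIntegrable f volume 0 a) :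
    ∫ x in -a..a, f x = 2 * ∫ x in 0..a, f x := by
  have hint' : IntervalIntegrable f volume (-a) 0 := by
    rw [IntervalIntegrable.iff_comp_neg]
    simpa [hf] using hint.symm
  have hreflect : ∫ x in -a..0, f x = ∫ x in 0..a, f x := by
    simpa [hf] using (intervalIntegral.integral_comp_neg (a := 0) (b := a) f).symm
  rw [← intervalIntegral.integral_add_adjacent_intervals hint' hint, hreflect, two_mul]

theorem image_sq_Ioc {a : ℝ} (ha : 0 ≤ a) :
    (fun x : ℝ => x ^ 2) '' Ioc 0 a = Ioc 0 (a ^ 2) := by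
  ext u
  refine ⟨?_, fun hu => ⟨√u, ⟨Real.sqrt_pos.2 hu.1, ?_⟩, Real.sq_sqrt hu.1.le⟩⟩
  · rintro ⟨x, hx, rfl⟩
    exact ⟨by positivity [hx.1], pow_le_pow_left₀ hx.1.le hx.2 2⟩
  · simpa [Real.sqrt_sq ha] using Real.sqrt_le_sqrt hu.2

theorem abs_two_mul_mul_sq_rpow_neg_half {x : ℝ} (hx : 0 < x) :
    |2 * x| * (x ^ 2) ^ (-1 / 2 : ℝ) = 2 := by
  rw [abs_of_pos (by positivity), ← Real.rpow_natCast, ← Real.rpow_mul hx.le]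
  norm_num [Real.rpow_neg_one, hx.ne']

theorem hasDerivWithinAt_sq (s : Set ℝ) (x : ℝ) :
    HasDerivWithinAt (fun x : ℝ => x ^ 2) (2 * x) s x :=
  ((hasDerivAt_pow 2 x).congr_deriv (by norm_num)).hasDerivWithinAt

section SquareSubstitution

variable {g : ℝ → ℝ} {a : ℝ}

theorem abs_deriv_sq_smul_eqOn :
    EqOn (fun x => |2 * x| • ((x ^ 2) ^ (-1 / 2 : ℝ) * g (x ^ 2))) (fun x => 2 * g (x ^ 2))
      (Ioc 0 a) := fun x hx => by
  simp only [smul_eq_mul, ← mul_assoc, abs_two_mul_mul_sq_rpow_neg_half hx.1]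

theorem integrableOn_comp_sq_iff (ha : 0 ≤ a) :
    IntegrableOn (fun x => g (x ^ 2)) (Ioc 0 a) ↔
      IntegrableOn (fun u => u ^ (-1 / 2 : ℝ) * g u) (Ioc 0 (a ^ 2)) := by
  rw [← image_sq_Ioc ha, integrableOn_image_iff_integrableOn_abs_deriv_smul measurableSet_Ioc
    (fun x _ => hasDerivWithinAt_sq _ x)
    ((pow_left_strictMonoOn₀ two_ne_zero).injOn.mono fun x hx => hx.1.le),
    integrableOn_congr_fun abs_deriv_sq_smul_eqOn measurableSet_Ioc]
  exact (integrable_const_mul_iff (isUnit_iff_ne_zero.2 two_ne_zero) _).symm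

theorem setIntegral_comp_sq (ha : 0 ≤ a) :
    ∫ x in Ioc 0 a, g (x ^ 2) = (∫ u in Ioc 0 (a ^ 2), u ^ (-1 / 2 : ℝ) * g u) / 2 := by
  rw [← image_sq_Ioc ha, integral_image_eq_integral_abs_deriv_smul measurableSet_Ioc
    (fun x _ => hasDerivWithinAt_sq _ x)
    ((pow_left_strictMonoOn₀ two_ne_zero).injOn.mono fun x hx => hx.1.le),
    setIntegral_congr_fun measurableSet_Ioc abs_deriv_sq_smul_eqOn, integral_const_mul]
  ring

theorem intervalIntegral.integral_comp_sq (ha : 0 ≤ a)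
    (hint : IntegrableOn (fun u => u ^ (-1 / 2 : ℝ) * g u) (Ioc 0 (a ^ 2))) :
    ∫ x in -a..a, g (x ^ 2) = ∫ u in 0..a ^ 2, u ^ (-1 / 2 : ℝ) * g u := by
  have hint' := (integrableOn_comp_sq_iff ha).2 hint
  rw [intervalIntegral.integral_neg_self_eq_two_mul_of_even (fun x => by rw [neg_sq])
    ((intervalIntegrable_iff_integrableOn_Ioc_of_le ha).2 hint'),
    intervalIntegral.integral_of_le ha, intervalIntegral.integral_of_le (sq_nonneg a),
    setIntegral_comp_sq ha]
  ring

end SquareSubstitution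

theorem hankelW_moment_odd_eq_zero (α β t : ℝ) (m : ℕ) :
    ∫ x in (-1 : ℝ)..1, x ^ (2 * m + 1) * ((1 - x ^ 2) ^ α * (1 - t * x ^ 2) ^ β) = 0 :=
  intervalIntegral.integral_neg_self_eq_zero_of_odd (fun x => by
    rw [Odd.neg_pow ⟨m, rfl⟩, neg_sq, neg_mul]) 1

theorem hankelW_moment_even_eq {α : ℝ} (hα : -1 < α) (β : ℝ) {t : ℝ} (ht : t < 1)
    (m : ℕ) :
    ∫ x in (-1 : ℝ)..1, x ^ (2 * m) * ((1 - x ^ 2) ^ α * (1 - t * x ^ 2) ^ β) =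
      ∫ u in (0 : ℝ)..1, u ^ m * (u ^ (-1 / 2 : ℝ) * (1 - u) ^ α * (1 - t * u) ^ β) := by
  have hreorder : ∀ u : ℝ, u ^ (-1 / 2 : ℝ) * (u ^ m * ((1 - u) ^ α * (1 - t * u) ^ β)) =
      u ^ m * (u ^ (-1 / 2 : ℝ) * (1 - u) ^ α * (1 - t * u) ^ β) := fun u => by ring
  have hint := integrableOn_pow_mul_mul_one_sub_mul_rpow
    (integrableOn_rpow_mul_one_sub_rpow (by norm_num : (-1 : ℝ) < -1 / 2) hα) m ht β
  simp only [pow_mul]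
  rw [intervalIntegral.integral_comp_sq
    (g := fun u => u ^ m * ((1 - u) ^ α * (1 - t * u) ^ β)) zero_le_one
    (by simpa only [one_pow, hreorder] using hint), one_pow]
  simp only [hreorder]

theorem integral_pow_succ_mul_rpow_neg_half (b c t : ℝ) (m : ℕ) :
    ∫ u in (0 : ℝ)..1, u ^ (m + 1) * (u ^ (-1 / 2 : ℝ) * (1 - u) ^ b * (1 - t * u) ^ c) =
      ∫ u in (0 : ℝ)..1, u ^ m * (u ^ (1 / 2 : ℝ) * (1 - u) ^ b * (1 - t * u) ^ c) := by
  refine intervalIntegral.integral_congr_ae (ae_of_all _ fun u hu => ?_)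
  rw [uIoc_of_le zero_le_one] at hu
  have hhalf : u ^ (-1 / 2 : ℝ) * u = u ^ (1 / 2 : ℝ) := by
    rw [← Real.rpow_add_one hu.1.ne']; norm_num
  rw [← hhalf, pow_succ]
  ring

theorem hankelW_eq_mul_hankelW2 {α : ℝ} (hα : -1 < α) (β : ℝ) {t : ℝ} (ht : t < 1)
    {n₀ n₁ : ℕ} (h₁ : n₁ ≤ n₀) (h₂ : n₀ ≤ n₁ + 1) :
    hankelW α β t (n₀ + n₁) = hankelW2 (-1 / 2) α β t n₀ * hankelW2 (1 / 2) α β t n₁ := by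
  rw [hankelW, Matrix.det_hankel_eq_mul_of_odd_eq_zero
    (fun k => ∫ x in (-1 : ℝ)..1, x ^ k * ((1 - x ^ 2) ^ α * (1 - t * x ^ 2) ^ β))
    (hankelW_moment_odd_eq_zero α β t) h₁ h₂, hankelW2, hankelW2]
  simp only [hankelW_moment_even_eq hα β ht, show ∀ k : ℕ, 2 * k + 2 = 2 * (k + 1) from
    fun k => by ring, integral_pow_succ_mul_rpow_neg_half]

theorem hankelW2_pos {a b : ℝ} (ha : -1 < a) (hb : -1 < b) (c : ℝ) {t : ℝ} (ht : t < 1)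
    (n : ℕ) : 0 < hankelW2 a b c t n := by
  refine det_hankel_integral_pos zero_lt_one (fun x hx => ?_) (fun k => ?_) n
  · have := one_sub_mul_pos ht (Ioo_subset_Icc_self hx)
    positivity [hx.1, sub_pos.2 hx.2]
  · exact (intervalIntegrable_iff_integrableOn_Ioc_of_le zero_le_one).2
      (integrableOn_pow_mul_mul_one_sub_mul_rpow (integrableOn_rpow_mul_one_sub_rpow ha hb) k ht c)

theorem differentiableAt_hankelW2 {a b : ℝ} (ha : -1 < a) (hb : -1 < b) (c : ℝ) {t : ℝ}
    (ht : t < 1) (n : ℕ) : DifferentiableAt ℝ (fun s => hankelW2 a b c s n) t := by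
  simp only [hankelW2, Matrix.det_apply', Matrix.of_apply]
  refine DifferentiableAt.fun_sum fun σ _ =>
    (DifferentiableAt.fun_finsetProd fun i _ => ?_).const_mul _
  exact differentiableAt_integral_pow_mul_mul_one_sub_mul_rpow
    (integrableOn_rpow_mul_one_sub_rpow ha hb) _ c ht

theorem deriv_log_hankelW {α : ℝ} (hα : -1 < α) (β : ℝ) {t : ℝ} (ht : t < 1) {n₀ n₁ : ℕ}
    (h₁ : n₁ ≤ n₀) (h₂ : n₀ ≤ n₁ + 1) :
    deriv (fun s => Real.log (hankelW α β s (n₀ + n₁))) t =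
      deriv (fun s => Real.log (hankelW2 (-1 / 2) α β s n₀)) t +
        deriv (fun s => Real.log (hankelW2 (1 / 2) α β s n₁)) t := by
  have hneg : (-1 : ℝ) < -1 / 2 := by norm_num
  have hpos : (-1 : ℝ) < 1 / 2 := by norm_num
  have hfactor : (fun s => Real.log (hankelW α β s (n₀ + n₁))) =ᶠ[𝓝 t] fun s =>
      Real.log (hankelW2 (-1 / 2) α β s n₀) + Real.log (hankelW2 (1 / 2) α β s n₁) := by
    filter_upwards [Iio_mem_nhds ht] with s hs
    rw [hankelW_eq_mul_hankelW2 hα β hs h₁ h₂,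
      Real.log_mul (hankelW2_pos hneg hα β hs n₀).ne' (hankelW2_pos hpos hα β hs n₁).ne']
  rw [hfactor.deriv_eq, deriv_fun_add
    ((differentiableAt_hankelW2 hneg hα β ht n₀).log (hankelW2_pos hneg hα β ht n₀).ne')
    ((differentiableAt_hankelW2 hpos hα β ht n₁).log (hankelW2_pos hpos hα β ht n₁).ne')]

/-- Painlevé VI σ-function representation of the logarithmic
`t`-derivative of the Hankel determinant, for even and odd matrix dimension. -/
theorem stmt_6 (α β : ℝ) (hα : -1 < α) :
    ∀ n : ℕ, ∀ t ∈ Set.Ioo (0:ℝ) 1,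
      HW α β (2 * n) t
          = sigmaW2 t n (-1/2) α β + sigmaW2 t n (1/2) α β
            + (β ^ 2 / 2 + 2 * (n:ℝ) * β + 1/8) * t
            - (β / 2) * (2 * (n:ℝ) + α + β) + (n:ℝ) * ((n:ℝ) + α) ∧
      HW α β (2 * n + 1) t
          = sigmaW2 t (n + 1) (-1/2) α β + sigmaW2 t n (1/2) α β
            + (β ^ 2 / 2 + (2 * (n:ℝ) + 1) * β + 1/8) * t
            - (β / 2) * (2 * (n:ℝ) + 1 + α + β)
            + (1/4) * (2 * (n:ℝ) + 1) * (2 * (n:ℝ) + 1 + 2 * α) := by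
  intro n t ht
  have heven := deriv_log_hankelW hα β ht.2 (le_refl n) n.le_succ
  have hodd := deriv_log_hankelW hα β ht.2 n.le_succ le_rfl
  rw [← two_mul] at heven
  rw [show n + 1 + n = 2 * n + 1 by ring] at hodd
  constructor
  · simp only [HW, sigmaW2, heven]
    ring
  · simp only [HW, sigmaW2, hodd]
    push_cast
    ring
end

section
/- For every integer n ≥ 0, the Hankel determinants generated by w factorize as D_{2n}[w(·,k²)] = D_n[w₂(·,k²,−1/2,α,β)] · D_n[w₂(·,k²,1/2,α,β)] and D_{2n+1}[w(·,k²)] = D_{n+1}[w₂(·,k²,−1/2,α,β)] · D_n[w₂(·,k²,1/2,α,β)]. -/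
open MeasureTheory

/-- The Hankel determinant `det(μ_{i+j})_{i,j=0}^{n-1}` of the moments of the
weight `v` on `[lo,hi]`; for `n = 0` it equals `1`. -/
noncomputable def hankelDetI (lo hi : ℝ) (v : ℝ → ℝ) (n : ℕ) : ℝ :=
  Matrix.det (Matrix.of fun i j : Fin n =>
    ∫ x in lo..hi, x ^ ((i:ℕ) + (j:ℕ)) * v x)

section Aux

/-- Determinant of a "checkerboard" matrix factorizes into the even and odd blocks. -/
lemma checkerboard_det (a : ℕ → ℝ) (p q N : ℕ) (hN : p + q = N)
    (hq : 2 * q ≤ N) (hp : 2 * p ≤ N + 1)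
    (M : Matrix (Fin N) (Fin N) ℝ)
    (hM : ∀ i j : Fin N, M i j = if Even ((i:ℕ) + (j:ℕ)) then a (((i:ℕ)+(j:ℕ))/2) else 0) :
    M.det = (Matrix.of fun i j : Fin p => a ((i:ℕ)+(j:ℕ))).det *
            (Matrix.of fun i j : Fin q => a ((i:ℕ)+(j:ℕ)+1)).det := by
  have hf : Function.Bijective
      (Sum.elim (fun i : Fin p => (⟨2*i, by omega⟩ : Fin N))
                (fun j : Fin q => (⟨2*j+1, by omega⟩ : Fin N))) := by
    rw [Fintype.bijective_iff_injective_and_card]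
    refine ⟨?_, by simp [hN]⟩
    rintro (i|i) (j|j) h <;>
      simp only [Sum.elim_inl, Sum.elim_inr, Fin.mk.injEq] at h
    · exact congrArg Sum.inl (Fin.ext (by omega))
    · omega
    · omega
    · exact congrArg Sum.inr (Fin.ext (by omega))
  set e := Equiv.ofBijective _ hf with he
  rw [← Matrix.det_submatrix_equiv_self e M]
  have hsub : M.submatrix e e =
      Matrix.fromBlocks (Matrix.of fun i j : Fin p => a ((i:ℕ)+(j:ℕ))) 0 0
        (Matrix.of fun i j : Fin q => a ((i:ℕ)+(j:ℕ)+1)) := by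
    ext i j
    rcases i with i | i <;> rcases j with j | j <;>
      simp only [Matrix.submatrix_apply, he, Equiv.ofBijective_apply, Sum.elim_inl,
        Sum.elim_inr, Matrix.fromBlocks_apply₁₁, Matrix.fromBlocks_apply₁₂,
        Matrix.fromBlocks_apply₂₁, Matrix.fromBlocks_apply₂₂, Matrix.of_apply,
        Matrix.zero_apply, hM]
    · rw [if_pos ⟨(i:ℕ)+(j:ℕ), by ring⟩]; congr 1; omega
    · rw [if_neg]; rintro ⟨m, hm⟩; omega
    · rw [if_neg]; rintro ⟨m, hm⟩; omega
    · rw [if_pos ⟨(i:ℕ)+(j:ℕ)+1, by ring⟩]; congr 1; omega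
  rw [hsub, Matrix.det_fromBlocks_zero₂₁]

lemma sq_image_Ioo : (fun x : ℝ => x ^ 2) '' Set.Ioo 0 1 = Set.Ioo 0 1 := by
  ext y
  constructor
  · rintro ⟨x, ⟨hx0, hx1⟩, rfl⟩
    exact ⟨by positivity, by show x^2 < 1; nlinarith⟩
  · rintro ⟨hy0, hy1⟩
    exact ⟨Real.sqrt y, ⟨Real.sqrt_pos.2 hy0,
      by rw [show (1:ℝ) = Real.sqrt 1 by simp]; exact Real.sqrt_lt_sqrt hy0.le hy1⟩,
      Real.sq_sqrt hy0.le⟩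

lemma sq_injOn_Ioo : Set.InjOn (fun x : ℝ => x ^ 2) (Set.Ioo 0 1) := by
  intro x hx y hy h
  simp only at h
  by_contra hne
  rcases lt_or_gt_of_ne hne with hlt | hlt <;> nlinarith [hx.1, hy.1]

/-- substitution u = x² -/
lemma subst_sq (g : ℝ → ℝ) :
    ∫ u in Set.Ioo (0:ℝ) 1, g u = ∫ x in Set.Ioo (0:ℝ) 1, |2 * x| * g (x ^ 2) := by
  have hderiv : ∀ x ∈ Set.Ioo (0:ℝ) 1,
      HasDerivWithinAt (fun x : ℝ => x ^ 2) (2 * x) (Set.Ioo (0:ℝ) 1) x := by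
    intro x _
    simpa [mul_comm] using (hasDerivAt_pow 2 x).hasDerivWithinAt
  have := integral_image_eq_integral_abs_deriv_smul measurableSet_Ioo hderiv sq_injOn_Ioo g
  rw [sq_image_Ioo] at this
  simpa [smul_eq_mul] using this

lemma wE_intInt_pos (α β k2 : ℝ) (hα : -1 < α) (hk2 : k2 ∈ Set.Ioo (0:ℝ) 1) (N : ℕ) :
    IntervalIntegrable (fun x : ℝ => x ^ N * ((1 - x^2)^α * (1 - k2*x^2)^β)) volume 0 1 := by
  obtain ⟨hk0, hk1⟩ := hk2
  have key : ∀ x : ℝ, x^2 ≤ 1 → (1 - k2*x^2 : ℝ) ≠ 0 := by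
    intro x hx2
    have : k2 * x^2 ≤ k2 := by nlinarith
    intro h; nlinarith
  have base : IntervalIntegrable (fun x : ℝ => (1-x)^α) volume 0 1 := by
    simpa using ((intervalIntegral.intervalIntegrable_rpow' (a:=0) (b:=1) hα).comp_sub_left 1).symm
  have hc : ContinuousOn (fun x : ℝ => x ^ N * (1+x)^α * (1-k2*x^2)^β)
      (Set.uIcc (0:ℝ) 1) := by
    rw [Set.uIcc_of_le (by norm_num : (0:ℝ) ≤ 1)]
    apply ContinuousOn.mul
    · apply ContinuousOn.mul (continuous_pow N).continuousOn
      exact (continuousOn_const.add continuousOn_id).rpow_const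
        (fun x hx => Or.inl (by rcases hx with ⟨h0, h1⟩; dsimp; nlinarith))
    · refine (continuousOn_const.sub (continuousOn_const.mul (continuous_pow 2).continuousOn)).rpow_const
        (fun x hx => Or.inl ?_)
      rcases hx with ⟨h0, h1⟩
      exact key x (by nlinarith)
  have hmul := base.continuousOn_mul hc
  rw [intervalIntegrable_iff_integrableOn_Ioc_of_le (by norm_num)] at hmul ⊢
  refine hmul.congr_fun ?_ measurableSet_Ioc
  intro x hx
  rcases hx with ⟨h0, h1⟩
  have h1x : (0:ℝ) ≤ 1 - x := by linarith
  have h1x' : (0:ℝ) ≤ 1 + x := by linarith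
  dsimp only
  rw [show (1 - x^2 : ℝ) = (1+x) * (1-x) by ring, Real.mul_rpow h1x' h1x]
  ring

lemma wE_intInt_neg (α β k2 : ℝ) (hα : -1 < α) (hk2 : k2 ∈ Set.Ioo (0:ℝ) 1) (N : ℕ) :
    IntervalIntegrable (fun x : ℝ => x ^ N * ((1 - x^2)^α * (1 - k2*x^2)^β)) volume (-1) 0 := by
  obtain ⟨hk0, hk1⟩ := hk2
  have key : ∀ x : ℝ, x^2 ≤ 1 → (1 - k2*x^2 : ℝ) ≠ 0 := by
    intro x hx2
    have : k2 * x^2 ≤ k2 := by nlinarith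
    intro h; nlinarith
  have base : IntervalIntegrable (fun x : ℝ => (1+x)^α) volume (-1) 0 := by
    have := (intervalIntegral.intervalIntegrable_rpow' (a:=0) (b:=1) hα).comp_add_right 1
    norm_num at this
    simpa [add_comm] using this
  have hc : ContinuousOn (fun x : ℝ => x ^ N * (1-x)^α * (1-k2*x^2)^β)
      (Set.uIcc (-1:ℝ) 0) := by
    rw [Set.uIcc_of_le (by norm_num : (-1:ℝ) ≤ 0)]
    apply ContinuousOn.mul
    · apply ContinuousOn.mul (continuous_pow N).continuousOn
      exact (continuousOn_const.sub continuousOn_id).rpow_const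
        (fun x hx => Or.inl (by rcases hx with ⟨h0, h1⟩; dsimp; nlinarith))
    · refine (continuousOn_const.sub (continuousOn_const.mul (continuous_pow 2).continuousOn)).rpow_const
        (fun x hx => Or.inl ?_)
      rcases hx with ⟨h0, h1⟩
      exact key x (by nlinarith)
  have hmul := base.continuousOn_mul hc
  rw [intervalIntegrable_iff_integrableOn_Ioc_of_le (by norm_num)] at hmul ⊢
  refine hmul.congr_fun ?_ measurableSet_Ioc
  intro x hx
  rcases hx with ⟨h0, h1⟩
  have h1x : (0:ℝ) ≤ 1 - x := by linarith
  have h1x' : (0:ℝ) ≤ 1 + x := by linarith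
  dsimp only
  rw [show (1 - x^2 : ℝ) = (1-x) * (1+x) by ring, Real.mul_rpow h1x h1x']
  ring

lemma moment_even (α β k2 : ℝ) (hα : -1 < α) (hk2 : k2 ∈ Set.Ioo (0:ℝ) 1) (m : ℕ) :
    ∫ x in (-1:ℝ)..1, x ^ (2*m) * ((1 - x^2)^α * (1 - k2*x^2)^β)
      = ∫ x in (0:ℝ)..1, x ^ m * (x^(-1/2:ℝ) * (1-x)^α * (1-k2*x)^β) := by
  have hsplit := intervalIntegral.integral_add_adjacent_intervals
    (wE_intInt_neg α β k2 hα hk2 (2*m)) (wE_intInt_pos α β k2 hα hk2 (2*m))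
  have hneg : (∫ x in (-1:ℝ)..0, x ^ (2*m) * ((1 - x^2)^α * (1 - k2*x^2)^β))
      = ∫ x in (0:ℝ)..1, x ^ (2*m) * ((1 - x^2)^α * (1 - k2*x^2)^β) := by
    have h := intervalIntegral.integral_comp_neg (a:=(0:ℝ)) (b:=1)
      (fun x : ℝ => x ^ (2*m) * ((1 - x^2)^α * (1 - k2*x^2)^β))
    norm_num at h
    rw [← h]
    try refine intervalIntegral.integral_congr fun x _ => ?_
    try rw [neg_pow, Even.neg_one_pow (even_two_mul m), one_mul, neg_sq]
  have hr : (∫ x in (0:ℝ)..1, x ^ m * (x^(-1/2:ℝ) * (1-x)^α * (1-k2*x)^β))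
      = 2 * ∫ x in (0:ℝ)..1, x ^ (2*m) * ((1 - x^2)^α * (1 - k2*x^2)^β) := by
    rw [intervalIntegral.integral_of_le (by norm_num : (0:ℝ) ≤ 1),
        intervalIntegral.integral_of_le (by norm_num : (0:ℝ) ≤ 1),
        integral_Ioc_eq_integral_Ioo, integral_Ioc_eq_integral_Ioo,
        subst_sq (fun u => u ^ m * (u^(-1/2:ℝ) * (1-u)^α * (1-k2*u)^β)),
        ← integral_const_mul]
    refine setIntegral_congr_fun measurableSet_Ioo fun x hx => ?_
    obtain ⟨hx0, hx1⟩ := hx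
    have hpow : ((x^2:ℝ))^(-1/2:ℝ) = x⁻¹ := by
      rw [← Real.rpow_natCast x 2, ← Real.rpow_mul hx0.le]
      norm_num [Real.rpow_neg_one]
    rw [hpow, abs_of_pos (by positivity : (0:ℝ) < 2*x), ← pow_mul]
    field_simp
  rw [← hsplit, hneg, hr]
  ring

lemma moment_odd (α β k2 : ℝ) (hα : -1 < α) (hk2 : k2 ∈ Set.Ioo (0:ℝ) 1) (m : ℕ) :
    ∫ x in (-1:ℝ)..1, x ^ (2*m+1) * ((1 - x^2)^α * (1 - k2*x^2)^β) = 0 := by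
  have hsplit := intervalIntegral.integral_add_adjacent_intervals
    (wE_intInt_neg α β k2 hα hk2 (2*m+1)) (wE_intInt_pos α β k2 hα hk2 (2*m+1))
  have hneg : (∫ x in (-1:ℝ)..0, x ^ (2*m+1) * ((1 - x^2)^α * (1 - k2*x^2)^β))
      = - ∫ x in (0:ℝ)..1, x ^ (2*m+1) * ((1 - x^2)^α * (1 - k2*x^2)^β) := by
    have h := intervalIntegral.integral_comp_neg (a:=(0:ℝ)) (b:=1)
      (fun x : ℝ => x ^ (2*m+1) * ((1 - x^2)^α * (1 - k2*x^2)^β))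
    norm_num at h
    rw [← h, ← intervalIntegral.integral_neg]
    refine intervalIntegral.integral_congr fun x _ => ?_
    rw [Odd.neg_pow ⟨m, by ring⟩]
    ring
  rw [← hsplit, hneg]
  ring

lemma moment_half (α β k2 : ℝ) (m : ℕ) :
    ∫ x in (0:ℝ)..1, x ^ m * (x^(1/2:ℝ) * (1-x)^α * (1-k2*x)^β)
      = ∫ x in (0:ℝ)..1, x ^ (m+1) * (x^(-1/2:ℝ) * (1-x)^α * (1-k2*x)^β) := by
  refine intervalIntegral.integral_congr fun x hx => ?_
  rw [Set.uIcc_of_le (by norm_num : (0:ℝ) ≤ 1)] at hx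
  obtain ⟨hx0, _⟩ := hx
  rcases eq_or_lt_of_le hx0 with rfl | hpos
  · simp [Real.zero_rpow, (by norm_num : (1/2:ℝ) ≠ 0), (by norm_num : (-1/2:ℝ) ≠ 0)]
  · have hh : (x:ℝ)^(1/2:ℝ) = x * x^(-1/2:ℝ) := by
      rw [← Real.rpow_one_add' hx0 (by norm_num : (1:ℝ) + (-1/2) ≠ 0)]
      norm_num
    rw [hh, pow_succ]
    ring

end Aux

/-- Factorization of the Hankel determinants of the even weight
`w(x,k²) = (1-x²)^α (1-k²x²)^β` on `[-1,1]` in terms of Hankel determinants of the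
deformed shifted Jacobi weights `w₂(x,k²,±1/2,α,β) = x^{±1/2}(1-x)^α (1-k²x)^β` on `[0,1]`. -/
theorem stmt_7 (α β k2 : ℝ) (hα : -1 < α) (hk2 : k2 ∈ Set.Ioo (0:ℝ) 1) :
    ∀ n : ℕ,
      hankelDetI (-1) 1 (fun x => (1 - x ^ 2) ^ α * (1 - k2 * x ^ 2) ^ β) (2 * n)
          = hankelDetI 0 1
              (fun x => x ^ (-1/2 : ℝ) * (1 - x) ^ α * (1 - k2 * x) ^ β) n
            * hankelDetI 0 1
              (fun x => x ^ (1/2 : ℝ) * (1 - x) ^ α * (1 - k2 * x) ^ β) n ∧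
      hankelDetI (-1) 1 (fun x => (1 - x ^ 2) ^ α * (1 - k2 * x ^ 2) ^ β) (2 * n + 1)
          = hankelDetI 0 1
              (fun x => x ^ (-1/2 : ℝ) * (1 - x) ^ α * (1 - k2 * x) ^ β) (n + 1)
            * hankelDetI 0 1
              (fun x => x ^ (1/2 : ℝ) * (1 - x) ^ α * (1 - k2 * x) ^ β) n := by
  intro n
  set A : ℕ → ℝ := fun m =>
    ∫ x in (0:ℝ)..1, x ^ m * (x ^ (-1/2:ℝ) * (1-x)^α * (1-k2*x)^β) with hA
  have hM : ∀ (N : ℕ) (i j : Fin N),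
      (Matrix.of fun i j : Fin N =>
        ∫ x in (-1:ℝ)..1, x ^ ((i:ℕ)+(j:ℕ)) * ((1 - x^2)^α * (1 - k2*x^2)^β)) i j
      = if Even ((i:ℕ)+(j:ℕ)) then A (((i:ℕ)+(j:ℕ))/2) else 0 := by
    intro N i j
    simp only [Matrix.of_apply]
    rcases Nat.even_or_odd ((i:ℕ)+(j:ℕ)) with ⟨m, hm⟩ | ⟨m, hm⟩
    · rw [if_pos ⟨m, hm⟩, show (i:ℕ)+(j:ℕ) = 2*m by omega,
        show (2*m)/2 = m by omega]
      exact moment_even α β k2 hα hk2 m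
    · rw [if_neg (by rw [hm]; rintro ⟨t, ht⟩; omega),
        show (i:ℕ)+(j:ℕ) = 2*m+1 by omega]
      exact moment_odd α β k2 hα hk2 m
  have hB : ∀ N : ℕ, hankelDetI 0 1
      (fun x => x ^ (1/2 : ℝ) * (1 - x) ^ α * (1 - k2 * x) ^ β) N
      = (Matrix.of fun i j : Fin N => A ((i:ℕ)+(j:ℕ)+1)).det := by
    intro N
    unfold hankelDetI
    congr 1
    ext i j
    simp only [Matrix.of_apply, hA]
    exact moment_half α β k2 ((i:ℕ)+(j:ℕ))
  have hAdet : ∀ N : ℕ, hankelDetI 0 1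
      (fun x => x ^ (-1/2 : ℝ) * (1 - x) ^ α * (1 - k2 * x) ^ β) N
      = (Matrix.of fun i j : Fin N => A ((i:ℕ)+(j:ℕ))).det := by
    intro N; rfl
  constructor
  · rw [hB, hAdet]
    exact checkerboard_det A n n (2*n) (by omega) (by omega) (by omega) _ (hM (2*n))
  · rw [hB, hAdet]
    exact checkerboard_det A (n+1) n (2*n+1) (by omega) (by omega) (by omega) _ (hM (2*n+1))
end

section
/- For every integer n ≥ 1 one has the two identities r_n·(r_n − α) = β_n·R_n·R_{n−1} and r_n*·(r_n* − β) = β_n·R_n*·R_{n−1}*. -/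
open MeasureTheory Polynomial Set

theorem stmt15_core
    (w : ℝ → ℝ) (P : ℕ → Polynomial ℝ)
    (hPmonic : ∀ n, (P n).Monic)
    (hPdeg : ∀ n, (P n).natDegree = n)
    (h : ℕ → ℝ)
    (hint : ∀ p : Polynomial ℝ,
      IntegrableOn (fun y => w y * p.eval y) (Ioc (-1:ℝ) 1))
    (horth : ∀ m : ℕ, ∀ p : Polynomial ℝ, p.degree < (m : ℕ) →
      ∫ y in Ioc (-1:ℝ) 1, w y * ((P m) * p).eval y = 0)
    (hval : ∀ m : ℕ, ∫ y in Ioc (-1:ℝ) 1, w y * ((P m) * (P m)).eval y = h m)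
    (y₀ : ℝ) (hy₀ : y₀ ≤ -1)
    (n : ℕ) (hn : 1 ≤ n) :
    (∫ y in Ioc (-1:ℝ) 1, w y * ((P n) * (P (n-1))).eval y / (y - y₀)) *
      ((∫ y in Ioc (-1:ℝ) 1, w y * ((P n) * (P (n-1))).eval y / (y - y₀)) - h (n-1)) =
    (∫ y in Ioc (-1:ℝ) 1, w y * ((P n) * (P n)).eval y / (y - y₀)) *
      (∫ y in Ioc (-1:ℝ) 1, w y * ((P (n-1)) * (P (n-1))).eval y / (y - y₀)) := by
  -- division with remainder at y₀
  have hdvd : ∀ m : ℕ, ∃ q : Polynomial ℝ,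
      P m = (X - C y₀) * q + C ((P m).eval y₀) := by
    intro m
    obtain ⟨q, hq⟩ := X_sub_C_dvd_sub_C_eval (a := y₀) (p := P m)
    exact ⟨q, by linear_combination hq⟩
  choose Q hQ using hdvd
  have heqQ : ∀ m, P m - C ((P m).eval y₀) = (X - C y₀) * Q m := by
    intro m; linear_combination (hQ m)
  have hQdeg : ∀ m : ℕ, (Q m).degree < (m : ℕ) := by
    intro m
    rcases eq_or_ne (Q m) 0 with h0 | h0
    · rw [h0, degree_zero]; exact_mod_cast WithBot.bot_lt_coe m
    · have h1 : ((X - C y₀) * Q m).natDegree = 1 + (Q m).natDegree := by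
        rw [natDegree_mul (X_sub_C_ne_zero y₀) h0, natDegree_X_sub_C]
      have h2 : (P m - C ((P m).eval y₀)).natDegree = m := by
        rw [natDegree_sub_C, hPdeg]
      rw [← heqQ m, h2] at h1
      rw [degree_eq_natDegree h0]
      exact_mod_cast (by omega : (Q m).natDegree < m)
  have hQmonic : ∀ m : ℕ, 1 ≤ m → (Q m).Monic := by
    intro m hm
    have hsub : (P m - C ((P m).eval y₀)).natDegree = m := by
      rw [natDegree_sub_C, hPdeg]
    have hmon : (P m - C ((P m).eval y₀)).Monic := by
      unfold Monic leadingCoeff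
      rw [hsub, coeff_sub, coeff_C, if_neg (by omega : m ≠ 0)]
      have := (hPmonic m).coeff_natDegree
      rw [hPdeg] at this
      simp [this]
    exact (monic_X_sub_C y₀).of_mul_monic_left (by rw [← heqQ m]; exact hmon)
  have hQdeg' : ∀ m : ℕ, 1 ≤ m → (Q m).natDegree = m - 1 := by
    intro m hm
    have h0 : Q m ≠ 0 := (hQmonic m hm).ne_zero
    have h1 : ((X - C y₀) * Q m).natDegree = 1 + (Q m).natDegree := by
      rw [natDegree_mul (X_sub_C_ne_zero y₀) h0, natDegree_X_sub_C]
    have h2 : (P m - C ((P m).eval y₀)).natDegree = m := by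
      rw [natDegree_sub_C, hPdeg]
    rw [← heqQ m, h2] at h1
    omega
  -- additivity of J
  have Jadd : ∀ p q : Polynomial ℝ,
      ∫ y in Ioc (-1:ℝ) 1, w y * (p + q).eval y
        = (∫ y in Ioc (-1:ℝ) 1, w y * p.eval y) + ∫ y in Ioc (-1:ℝ) 1, w y * q.eval y := by
    intro p q
    simp only [eval_add, mul_add]
    exact integral_add (hint p) (hint q)
  -- key value: ∫ w (Q n * P (n-1)) = h (n-1)
  have hA : ∫ y in Ioc (-1:ℝ) 1, w y * ((Q n) * (P (n-1))).eval y = h (n-1) := by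
    have hd : (Q n - P (n-1)).degree < ((n-1 : ℕ) : WithBot ℕ) := by
      rcases eq_or_ne (Q n) (P (n-1)) with hE | hE
      · rw [hE, sub_self, degree_zero]; exact_mod_cast WithBot.bot_lt_coe (n-1)
      · have hdeq : (Q n).degree = (P (n-1)).degree := by
          rw [degree_eq_natDegree (hQmonic n hn).ne_zero,
            degree_eq_natDegree (hPmonic (n-1)).ne_zero, hQdeg' n hn, hPdeg]
        have := degree_sub_lt hdeq (hQmonic n hn).ne_zero
          (by rw [(hQmonic n hn).leadingCoeff, (hPmonic (n-1)).leadingCoeff])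
        rwa [degree_eq_natDegree (hQmonic n hn).ne_zero, hQdeg' n hn] at this
    have hsplit : Q n * P (n-1) = P (n-1) * P (n-1) + P (n-1) * (Q n - P (n-1)) := by ring
    rw [hsplit, Jadd, hval (n-1), horth (n-1) _ hd, add_zero]
  -- a.e. singleton at y₀ is null
  have hne : ∀ᵐ y ∂(volume.restrict (Ioc (-1:ℝ) 1)), y ≠ y₀ := by
    refine ae_restrict_of_ae ?_
    have : volume ({y₀} : Set ℝ) = 0 := Real.volume_singleton
    rw [ae_iff]
    simpa [not_not, Set.setOf_eq_eq_singleton'] using this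
  -- the a.e. splitting lemma
  have hae : ∀ (u p : Polynomial ℝ) (c : ℝ),
      (fun y => w y * ((((X - C y₀) * u + C c) * p).eval y) / (y - y₀)) =ᵐ[volume.restrict (Ioc (-1:ℝ) 1)]
      (fun y => w y * (u * p).eval y + c * (w y * p.eval y / (y - y₀))) := by
    intro u p c
    filter_upwards [hne] with y hy
    have hy0 : y - y₀ ≠ 0 := sub_ne_zero.mpr hy
    simp only [eval_mul, eval_add, eval_sub, eval_X, eval_C]
    field_simp
  have hae' : ∀ (m : ℕ) (p : Polynomial ℝ),
      (fun y => w y * ((P m) * p).eval y / (y - y₀)) =ᵐ[volume.restrict (Ioc (-1:ℝ) 1)]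
      (fun y => w y * (Q m * p).eval y
        + (P m).eval y₀ * (w y * p.eval y / (y - y₀))) := by
    intro m p
    have := hae (Q m) p ((P m).eval y₀)
    rw [← hQ m] at this
    exact this
  have hcomm : ∀ m j : ℕ, (∫ y in Ioc (-1:ℝ) 1, w y * ((P m) * (P j)).eval y / (y - y₀))
      = ∫ y in Ioc (-1:ℝ) 1, w y * ((P j) * (P m)).eval y / (y - y₀) := by
    intro m j; rw [mul_comm (P m)]
  have horth' : ∀ (m : ℕ) (p : Polynomial ℝ), p.degree < (m : ℕ) →
      ∫ y in Ioc (-1:ℝ) 1, w y * (p * (P m)).eval y = 0 := by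
    intro m p hp
    rw [mul_comm p]; exact horth m p hp
  rcases eq_or_ne ((P n).eval y₀) 0 with hz | hnz
  · -- case e_n = 0 : Inm = h(n-1), In = 0
    have h1 : (∫ y in Ioc (-1:ℝ) 1, w y * ((P n) * (P (n-1))).eval y / (y - y₀)) = h (n-1) := by
      rw [integral_congr_ae (hae' n (P (n-1))), hz]
      simpa using hA
    have h2 : (∫ y in Ioc (-1:ℝ) 1, w y * ((P n) * (P n)).eval y / (y - y₀)) = 0 := by
      rw [integral_congr_ae (hae' n (P n)), hz]
      simpa using horth' n (Q n) (hQdeg n)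
    rw [h1, h2]; ring
  rcases eq_or_ne ((P (n-1)).eval y₀) 0 with hz1 | hnz1
  · -- case e_{n-1} = 0 : Inm = 0, In1 = 0
    have hQd : (Q (n-1)).degree < (n : ℕ) :=
      lt_of_lt_of_le (hQdeg (n-1)) (by exact_mod_cast Nat.cast_le.mpr (Nat.sub_le n 1))
    have h1 : (∫ y in Ioc (-1:ℝ) 1, w y * ((P n) * (P (n-1))).eval y / (y - y₀)) = 0 := by
      rw [hcomm, integral_congr_ae (hae' (n-1) (P n)), hz1]
      simpa [eval_mul, mul_comm] using horth n (Q (n-1)) hQd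
    have h2 : (∫ y in Ioc (-1:ℝ) 1, w y * ((P (n-1)) * (P (n-1))).eval y / (y - y₀)) = 0 := by
      rw [integral_congr_ae (hae' (n-1) (P (n-1))), hz1]
      simpa [eval_mul, mul_comm] using horth (n-1) (Q (n-1)) (hQdeg (n-1))
    rw [h1, h2]; ring
  -- both boundary values nonzero
  set g : ℝ → ℝ := fun y => w y / (y - y₀) with hg
  have haeFn : ∀ m : ℕ, (fun y => w y * (P m).eval y / (y - y₀)) =ᵐ[volume.restrict (Ioc (-1:ℝ) 1)]
      (fun y => w y * (Q m).eval y + (P m).eval y₀ * g y) := by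
    intro m
    have := hae' m 1
    simpa using this
  by_cases HG : Integrable g (volume.restrict (Ioc (-1:ℝ) 1))
  · -- integrable case
    have hFi : ∀ m : ℕ, Integrable (fun y => w y * (P m).eval y / (y - y₀)) (volume.restrict (Ioc (-1:ℝ) 1)) := by
      intro m
      exact (integrable_congr (haeFn m)).mpr
        (((hint (Q m)).add (HG.const_mul ((P m).eval y₀))))
    have h1 : (∫ y in Ioc (-1:ℝ) 1, w y * ((P n) * (P (n-1))).eval y / (y - y₀))
        = h (n-1) + (P n).eval y₀ * ∫ y in Ioc (-1:ℝ) 1, w y * (P (n-1)).eval y / (y - y₀) := by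
      rw [integral_congr_ae (hae' n (P (n-1))),
        integral_add (hint (Q n * P (n-1))) ((hFi (n-1)).const_mul _), hA,
        integral_const_mul]
    have h2 : (∫ y in Ioc (-1:ℝ) 1, w y * ((P n) * (P (n-1))).eval y / (y - y₀))
        = (P (n-1)).eval y₀ * ∫ y in Ioc (-1:ℝ) 1, w y * (P n).eval y / (y - y₀) := by
      rw [hcomm, integral_congr_ae (hae' (n-1) (P n)),
        integral_add (hint (Q (n-1) * P n)) ((hFi n).const_mul _),
        integral_const_mul]
      have hQd : (Q (n-1)).degree < (n : ℕ) :=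
        lt_of_lt_of_le (hQdeg (n-1)) (by exact_mod_cast Nat.cast_le.mpr (Nat.sub_le n 1))
      rw [horth' n (Q (n-1)) hQd, zero_add]
    have h3 : (∫ y in Ioc (-1:ℝ) 1, w y * ((P n) * (P n)).eval y / (y - y₀))
        = (P n).eval y₀ * ∫ y in Ioc (-1:ℝ) 1, w y * (P n).eval y / (y - y₀) := by
      rw [integral_congr_ae (hae' n (P n)),
        integral_add (hint (Q n * P n)) ((hFi n).const_mul _), integral_const_mul,
        horth' n (Q n) (hQdeg n), zero_add]
    have h4 : (∫ y in Ioc (-1:ℝ) 1, w y * ((P (n-1)) * (P (n-1))).eval y / (y - y₀))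
        = (P (n-1)).eval y₀ * ∫ y in Ioc (-1:ℝ) 1, w y * (P (n-1)).eval y / (y - y₀) := by
      rw [integral_congr_ae (hae' (n-1) (P (n-1))),
        integral_add (hint (Q (n-1) * P (n-1))) ((hFi (n-1)).const_mul _),
        integral_const_mul, horth' (n-1) (Q (n-1)) (hQdeg (n-1)), zero_add]
    rw [h3, h4]
    nth_rewrite 1 [h2]
    nth_rewrite 1 [h1]
    ring
  · -- non integrable case : Inm = In = 0
    have hnF : ∀ m : ℕ, (P m).eval y₀ ≠ 0 →
        ¬ Integrable (fun y => w y * (P m).eval y / (y - y₀)) (volume.restrict (Ioc (-1:ℝ) 1)) := by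
      intro m hm hc
      have hsum := (integrable_congr (haeFn m)).mp hc
      have hgi : Integrable (fun y => (P m).eval y₀ * g y) (volume.restrict (Ioc (-1:ℝ) 1)) := by
        have := hsum.sub (hint (Q m))
        refine this.congr (Filter.Eventually.of_forall fun y => by simp only [Pi.sub_apply]; ring)
      exact HG (by
        have := hgi.const_mul ((P m).eval y₀)⁻¹
        refine this.congr (Filter.Eventually.of_forall fun y => ?_)
        field_simp)
    have h1 : (∫ y in Ioc (-1:ℝ) 1, w y * ((P n) * (P (n-1))).eval y / (y - y₀)) = 0 := by
      rw [hcomm]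
      refine integral_undef fun hc => ?_
      have hsum := (integrable_congr (hae' (n-1) (P n))).mp hc
      have : Integrable (fun y => (P (n-1)).eval y₀ * (w y * (P n).eval y / (y - y₀))) (volume.restrict (Ioc (-1:ℝ) 1)) := by
        have := hsum.sub (hint (Q (n-1) * P n))
        refine this.congr (Filter.Eventually.of_forall fun y => by simp only [Pi.sub_apply]; ring)
      refine hnF n hnz ?_
      have := this.const_mul ((P (n-1)).eval y₀)⁻¹
      refine this.congr (Filter.Eventually.of_forall fun y => ?_)
      field_simp
    have h2 : (∫ y in Ioc (-1:ℝ) 1, w y * ((P n) * (P n)).eval y / (y - y₀)) = 0 := by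
      refine integral_undef fun hc => ?_
      have hsum := (integrable_congr (hae' n (P n))).mp hc
      have : Integrable (fun y => (P n).eval y₀ * (w y * (P n).eval y / (y - y₀))) (volume.restrict (Ioc (-1:ℝ) 1)) := by
        have := hsum.sub (hint (Q n * P n))
        refine this.congr (Filter.Eventually.of_forall fun y => by simp only [Pi.sub_apply]; ring)
      refine hnF n hnz ?_
      have := this.const_mul ((P n).eval y₀)⁻¹
      refine this.congr (Filter.Eventually.of_forall fun y => ?_)
      field_simp
    rw [h1, h2]; ring

theorem stmt15_key (γ u v v1 hh hh1 bb : ℝ) (hh0 : hh ≠ 0) (hh10 : hh1 ≠ 0)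
    (hbb : bb * hh1 = hh) (hcore : u * (u - hh1) = v * v1) :
    (γ/hh1 * u) * (γ/hh1 * u - γ) = bb * (γ/hh * v) * (γ/hh1 * v1) := by
  have hbb0 : bb ≠ 0 := by
    intro h0; rw [h0, zero_mul] at hbb; exact hh0 hbb.symm
  have h1 : (γ/hh1 * u) * (γ/hh1 * u - γ) = γ^2/hh1^2 * (u * (u - hh1)) := by
    field_simp
  have h2 : bb * (γ/hh * v) * (γ/hh1 * v1) = γ^2/hh1^2 * (v * v1) := by
    rw [← hbb]; field_simp
  rw [h1, h2, hcore]

/-- The double-pole residue identities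
`r_n(r_n−α) = β_n R_n R_{n−1}` and `r_n*(r_n*−β) = β_n R_n* R_{n−1}*`. -/
theorem stmt_15
    (α β k2 : ℝ) (hα : -1 < α) (hk2 : k2 ∈ Set.Ioo (0:ℝ) 1)
    (w : ℝ → ℝ)
    (hw : ∀ x : ℝ, w x = (1 - x ^ 2) ^ α * (1 - k2 * x ^ 2) ^ β)
    (P : ℕ → Polynomial ℝ)
    (hPmonic : ∀ n, (P n).Monic)
    (hPdeg : ∀ n, (P n).natDegree = n)
    (h : ℕ → ℝ) (hpos : ∀ n, 0 < h n)
    (horth : ∀ m n : ℕ,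
      (∫ x in (-1:ℝ)..1, (P m).eval x * (P n).eval x * w x)
        = if m = n then h n else 0)
    (b : ℕ → ℝ) (hb0 : b 0 = 0)
    (hrec : ∀ n : ℕ, 1 ≤ n →
      Polynomial.X * P n = P (n + 1) + Polynomial.C (b n) * P (n - 1))
    (R Rs r rs : ℕ → ℝ)
    (hR : ∀ n : ℕ, R n = α / h n *
      ∫ y in (-1:ℝ)..1, w y * ((P n).eval y) ^ 2 / (1 + y))
    (hRs : ∀ n : ℕ, Rs n = β / h n *
      ∫ y in (-1:ℝ)..1, w y * ((P n).eval y) ^ 2 / (1 / Real.sqrt k2 + y))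
    (hr0 : r 0 = 0) (hrs0 : rs 0 = 0)
    (hr : ∀ n : ℕ, 1 ≤ n → r n = α / h (n - 1) *
      ∫ y in (-1:ℝ)..1, w y * (P n).eval y * (P (n - 1)).eval y / (1 + y))
    (hrs : ∀ n : ℕ, 1 ≤ n → rs n = β / h (n - 1) *
      ∫ y in (-1:ℝ)..1, w y * (P n).eval y * (P (n - 1)).eval y / (1 / Real.sqrt k2 + y)) :
    ∀ n : ℕ, 1 ≤ n →
      r n * (r n - α) = b n * R n * R (n - 1) ∧
      rs n * (rs n - β) = b n * Rs n * Rs (n - 1) := by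
  have hP0 : P 0 = 1 := ((hPmonic 0).natDegree_eq_zero).mp (hPdeg 0)
  -- weight is nonnegative on the interval
  have hwnn : ∀ y ∈ Ioc (-1:ℝ) 1, 0 ≤ w y := by
    intro y hy
    rw [hw]
    have h1 : (0:ℝ) ≤ 1 - y ^ 2 := by nlinarith [hy.1, hy.2]
    have h2 : (0:ℝ) ≤ 1 - k2 * y ^ 2 := by nlinarith [hk2.1, hk2.2, sq_nonneg y]
    exact mul_nonneg (Real.rpow_nonneg h1 α) (Real.rpow_nonneg h2 β)
  -- the weight itself is integrable
  have hw_int : IntegrableOn w (Ioc (-1:ℝ) 1) := by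
    have h00 := horth 0 0
    rw [if_pos rfl] at h00
    by_contra hni
    have hnii : ¬ IntervalIntegrable (fun x => (P 0).eval x * (P 0).eval x * w x)
        volume (-1) 1 := by
      intro hi
      refine hni ?_
      have := (intervalIntegrable_iff_integrableOn_Ioc_of_le (by norm_num)).mp hi
      simpa [hP0] using this
    rw [intervalIntegral.integral_undef hnii] at h00
    exact absurd h00.symm (ne_of_gt (hpos 0))
  -- w times any polynomial is integrable
  have hint : ∀ p : Polynomial ℝ,
      IntegrableOn (fun y => w y * p.eval y) (Ioc (-1:ℝ) 1) := by
    intro p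
    obtain ⟨Cb, hCb⟩ := (isCompact_Icc (a := (-1:ℝ)) (b := 1)).exists_bound_of_continuousOn
      ((Polynomial.continuous p).continuousOn)
    refine Integrable.mono' (hw_int.const_mul Cb)
      (hw_int.aestronglyMeasurable.mul (Polynomial.continuous p).aestronglyMeasurable) ?_
    rw [ae_restrict_iff' measurableSet_Ioc]
    refine Filter.Eventually.of_forall fun y hy => ?_
    have hb' := hCb y ⟨le_of_lt hy.1, hy.2⟩
    have hwy := hwnn y hy
    rw [Real.norm_eq_abs] at hb' ⊢
    rw [abs_mul, abs_of_nonneg hwy]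
    nlinarith [abs_nonneg (p.eval y)]
  -- orthogonality in set-integral form
  have hconv : ∀ m j : ℕ, (∫ y in Ioc (-1:ℝ) 1, w y * ((P m) * (P j)).eval y)
      = if m = j then h j else 0 := by
    intro m j
    have hmj := horth m j
    rw [intervalIntegral.integral_of_le (by norm_num : (-1:ℝ) ≤ 1)] at hmj
    rw [← hmj]
    refine integral_congr_ae (Filter.Eventually.of_forall fun y => ?_)
    simp only [eval_mul]
    ring
  have hval : ∀ m : ℕ, ∫ y in Ioc (-1:ℝ) 1, w y * ((P m) * (P m)).eval y = h m := by
    intro m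
    have := hconv m m
    rwa [if_pos rfl] at this
  -- orthogonality against all lower-degree polynomials
  have hO : ∀ m : ℕ, ∀ p : Polynomial ℝ, p.degree < (m:ℕ) →
      ∫ y in Ioc (-1:ℝ) 1, w y * ((P m) * p).eval y = 0 := by
    intro m
    suffices hS : ∀ d : ℕ, ∀ p : Polynomial ℝ, p.natDegree ≤ d → p.degree < (m:ℕ) →
        ∫ y in Ioc (-1:ℝ) 1, w y * ((P m) * p).eval y = 0 by
      exact fun p hp => hS p.natDegree p le_rfl hp
    intro d
    induction d with
    | zero =>
      intro p hp0 hpm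
      have hpc : p = C (p.coeff 0) := Polynomial.eq_C_of_natDegree_le_zero hp0
      rcases eq_or_ne (p.coeff 0) 0 with hc0 | hc0
      · rw [hpc, hc0]; simp
      · have hm0 : m ≠ 0 := by
          intro hm
          rw [hm] at hpm
          have hdeg : p.degree = 0 := by rw [hpc]; exact degree_C hc0
          rw [hdeg] at hpm
          simp at hpm
        have h1 : (P m) * p = C (p.coeff 0) * (P m * P 0) := by
          nth_rewrite 1 [hpc]
          rw [hP0]; ring
        rw [h1]
        have h2 : ∀ y : ℝ, w y * eval y (C (p.coeff 0) * (P m * P 0))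
            = (p.coeff 0) * (w y * eval y (P m * P 0)) := by
          intro y; simp only [eval_mul, eval_C]; ring
        rw [integral_congr_ae (Filter.Eventually.of_forall h2), integral_const_mul,
          hconv m 0, if_neg hm0, mul_zero]
    | succ d ih =>
      intro p hp0 hpm
      have hPd1 : (P (d+1)).coeff (d+1) = 1 := by
        have := (hPmonic (d+1)).coeff_natDegree
        rwa [hPdeg] at this
      have key : p.coeff (d+1) ≠ 0 → ((d+1:ℕ) : WithBot ℕ) < (m:ℕ) := by
        intro haz
        have hdp : (d+1 : ℕ) ≤ p.natDegree := le_natDegree_of_ne_zero haz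
        have hpne : p ≠ 0 := fun h0 => by simp [h0] at haz
        have hpd : p.natDegree = d+1 := le_antisymm hp0 hdp
        have hpdeg : p.degree = ((d+1:ℕ) : WithBot ℕ) := by
          rw [degree_eq_natDegree hpne, hpd]
        exact hpdeg ▸ hpm
      set a := p.coeff (d+1) with ha
      set p' := p - C a * P (d+1) with hp'
      have hp'deg : p'.natDegree ≤ d := by
        rw [natDegree_le_iff_coeff_eq_zero]
        intro N hN
        rw [hp', coeff_sub, coeff_C_mul]
        rcases eq_or_ne N (d+1) with rfl | hNe
        · rw [hPd1, ha, mul_one, sub_self]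
        · have hN2 : d + 1 < N := by omega
          rw [natDegree_le_iff_coeff_eq_zero.mp hp0 N hN2,
            natDegree_le_iff_coeff_eq_zero.mp (le_of_eq (hPdeg (d+1))) N hN2,
            mul_zero, sub_zero]
      have hp'degm : p'.degree < (m:ℕ) := by
        rcases eq_or_ne a 0 with haz | haz
        · rw [hp', haz, map_zero, zero_mul, sub_zero]; exact hpm
        · have hCaP : (C a * P (d+1)).degree ≤ ((d+1:ℕ) : WithBot ℕ) :=
            le_trans (degree_mul_le _ _)
              (by rw [degree_C haz, zero_add,
                degree_eq_natDegree (hPmonic (d+1)).ne_zero, hPdeg])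
          exact lt_of_le_of_lt (degree_sub_le _ _)
            (max_lt hpm (lt_of_le_of_lt hCaP (key haz)))
      have hsplit : ∀ y : ℝ, w y * eval y ((P m) * p)
          = w y * eval y ((P m) * p') + a * (w y * eval y ((P m) * (P (d+1)))) := by
        intro y
        have hpp : p = p' + C a * P (d+1) := by rw [hp']; ring
        rw [hpp]
        simp only [eval_mul, eval_add, eval_C]
        ring
      rw [integral_congr_ae (Filter.Eventually.of_forall hsplit),
        integral_add (hint (P m * p')) ((hint (P m * P (d+1))).const_mul a),
        ih p' hp'deg hp'degm, integral_const_mul, zero_add]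
      rcases eq_or_ne a 0 with haz | haz
      · rw [haz, zero_mul]
      · have hmne : m ≠ d + 1 := by
          have := key haz
          intro hmd
          rw [hmd] at this
          exact lt_irrefl _ this
        rw [hconv m (d+1), if_neg hmne, mul_zero]
  -- recurrence coefficient relation
  have hbh : ∀ n : ℕ, 1 ≤ n → b n * h (n - 1) = h n := by
    intro n hn
    have hrecn := hrec n hn
    have hleft : ∫ y in Ioc (-1:ℝ) 1, w y * eval y ((X * P n) * P (n-1))
        = b n * h (n-1) := by
      have hsplit : ∀ y : ℝ, w y * eval y ((X * P n) * P (n-1))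
          = w y * eval y (P (n+1) * P (n-1)) + b n * (w y * eval y (P (n-1) * P (n-1))) := by
        intro y
        rw [hrecn]
        simp only [eval_mul, eval_add, eval_C, eval_X]
        ring
      rw [integral_congr_ae (Filter.Eventually.of_forall hsplit),
        integral_add (hint _) ((hint _).const_mul _), integral_const_mul,
        hconv (n+1) (n-1), if_neg (by omega), hval (n-1), zero_add]
    have hright : ∫ y in Ioc (-1:ℝ) 1, w y * eval y ((X * P n) * P (n-1)) = h n := by
      have hm : (X * P (n-1)).Monic := monic_X.mul (hPmonic (n-1))
      have hnd : (X * P (n-1)).natDegree = n := by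
        rw [natDegree_mul X_ne_zero (hPmonic (n-1)).ne_zero, natDegree_X, hPdeg]
        omega
      have hE : (X * P (n-1) - P n).degree < ((n:ℕ) : WithBot ℕ) := by
        rcases eq_or_ne (X * P (n-1)) (P n) with hE0 | hE0
        · rw [hE0, sub_self, degree_zero]; exact_mod_cast WithBot.bot_lt_coe n
        · have hdeq : (X * P (n-1)).degree = (P n).degree := by
            rw [degree_eq_natDegree hm.ne_zero, degree_eq_natDegree (hPmonic n).ne_zero,
              hnd, hPdeg]
          have := degree_sub_lt hdeq hm.ne_zero
            (by rw [hm.leadingCoeff, (hPmonic n).leadingCoeff])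
          rwa [degree_eq_natDegree hm.ne_zero, hnd] at this
      have hsplit : ∀ y : ℝ, w y * eval y ((X * P n) * P (n-1))
          = w y * eval y (P n * P n) + w y * eval y (P n * (X * P (n-1) - P n)) := by
        intro y
        simp only [eval_mul, eval_add, eval_sub, eval_X]
        ring
      rw [integral_congr_ae (Filter.Eventually.of_forall hsplit),
        integral_add (hint _) (hint _), hval n, hO n _ hE, add_zero]
    rw [← hleft]; exact hright
  -- now the main statement
  intro n hn
  have h1p : h (n-1) ≠ 0 := (hpos (n-1)).ne'
  have hnp : h n ≠ 0 := (hpos n).ne'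
  have hbhn := hbh n hn
  constructor
  · -- first identity, pole at -1
    have hcore := stmt15_core w P hPmonic hPdeg h hint hO hval (-1) (by norm_num) n hn
    have hc1 : (∫ y in (-1:ℝ)..1, w y * (P n).eval y * (P (n-1)).eval y / (1 + y))
        = ∫ y in Ioc (-1:ℝ) 1, w y * ((P n) * (P (n-1))).eval y / (y - (-1)) := by
      rw [intervalIntegral.integral_of_le (by norm_num : (-1:ℝ) ≤ 1)]
      refine integral_congr_ae (Filter.Eventually.of_forall fun y => ?_)
      simp only [eval_mul]
      ring
    have hc2 : ∀ m : ℕ, (∫ y in (-1:ℝ)..1, w y * ((P m).eval y) ^ 2 / (1 + y))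
        = ∫ y in Ioc (-1:ℝ) 1, w y * ((P m) * (P m)).eval y / (y - (-1)) := by
      intro m
      rw [intervalIntegral.integral_of_le (by norm_num : (-1:ℝ) ≤ 1)]
      refine integral_congr_ae (Filter.Eventually.of_forall fun y => ?_)
      simp only [eval_mul]
      ring
    rw [hr n hn, hR n, hR (n-1), hc1, hc2 n, hc2 (n-1)]
    exact stmt15_key α _ _ _ _ _ _ hnp h1p hbhn hcore
  · -- second identity, pole at -1/√k2
    have hs0 : 0 < Real.sqrt k2 := Real.sqrt_pos.mpr hk2.1
    have hs1 : Real.sqrt k2 ≤ 1 := Real.sqrt_le_one.mpr hk2.2.le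
    have hy0 : -(1 / Real.sqrt k2) ≤ -1 := by
      rw [neg_le_neg_iff, le_div_iff₀ hs0]
      linarith
    have hcore := stmt15_core w P hPmonic hPdeg h hint hO hval (-(1 / Real.sqrt k2)) hy0 n hn
    have hc1 : (∫ y in (-1:ℝ)..1, w y * (P n).eval y * (P (n-1)).eval y / (1 / Real.sqrt k2 + y))
        = ∫ y in Ioc (-1:ℝ) 1, w y * ((P n) * (P (n-1))).eval y / (y - (-(1 / Real.sqrt k2))) := by
      rw [intervalIntegral.integral_of_le (by norm_num : (-1:ℝ) ≤ 1)]
      refine integral_congr_ae (Filter.Eventually.of_forall fun y => ?_)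
      simp only [eval_mul]
      ring
    have hc2 : ∀ m : ℕ, (∫ y in (-1:ℝ)..1, w y * ((P m).eval y) ^ 2 / (1 / Real.sqrt k2 + y))
        = ∫ y in Ioc (-1:ℝ) 1, w y * ((P m) * (P m)).eval y / (y - (-(1 / Real.sqrt k2))) := by
      intro m
      rw [intervalIntegral.integral_of_le (by norm_num : (-1:ℝ) ≤ 1)]
      refine integral_congr_ae (Filter.Eventually.of_forall fun y => ?_)
      simp only [eval_mul]
      ring
    rw [hrs n hn, hRs n, hRs (n-1), hc1, hc2 n, hc2 (n-1)]
    exact stmt15_key β _ _ _ _ _ _ hnp h1p hbhn hcore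
end
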